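/- arXiv:math/0609111 — 2 statements merged into one kernel-verified Lean document; each statement's English description precedes it below -/
import Mathlib

section
/- If G is a connected graph on n ≥ 3 vertices with diameter D, then μ(G)^{D-1} + μ(G)^D ≥ n, where μ(G) is the largest adjacency eigenvalue. -/
/-!
Every pair of vertices is joined by a walk of length `D - 1` or `D`, so for the all-ones vector
`𝟙` we get `𝟙ᵀ (A^(D-1) + A^D) 𝟙 ≥ n²`, the left side counting walks of these lengths. On the
other hand `A` has nonnegative entries, so every eigenvalue has absolute value at most `μ`, and the
spectral theorem gives `𝟙ᵀ A^k 𝟙 ≤ μ^k ‖𝟙‖² = μ^k n`.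
-/

open Classical in
noncomputable def adjMat {V : Type*} [Fintype V] (G : SimpleGraph V) :
    Matrix V V ℝ :=
  Matrix.of fun i j => if G.Adj i j then 1 else 0

def IsAdjEigenvalue {V : Type*} [Fintype V] (A : Matrix V V ℝ) (μ : ℝ) : Prop :=
  ∃ x : V → ℝ, x ≠ 0 ∧ A.mulVec x = μ • x

def IsMaxAdjEigenvalue {V : Type*} [Fintype V] (A : Matrix V V ℝ) (μ : ℝ) : Prop :=
  IsAdjEigenvalue A μ ∧ ∀ ν, IsAdjEigenvalue A ν → ν ≤ μ

def IsMinAdjEigenvalue {V : Type*} [Fintype V] (A : Matrix V V ℝ) (μ : ℝ) : Prop :=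
  IsAdjEigenvalue A μ ∧ ∀ ν, IsAdjEigenvalue A ν → μ ≤ ν

open Matrix
open scoped MatrixOrder

namespace SimpleGraph

variable {V : Type*} {G : SimpleGraph V}

lemma exists_walk_length_eq_add_two_mul {u v w : V} (huw : G.Adj u w) (p : G.Walk u v) (m : ℕ) :
    ∃ q : G.Walk u v, q.length = p.length + 2 * m := by
  induction m with
  | zero => exact ⟨p, rfl⟩
  | succ m ih =>
    obtain ⟨q, hq⟩ := ih
    exact ⟨.cons huw (.cons huw.symm q), by simp only [Walk.length_cons, hq]; ring⟩

/-- Shortest paths can be lengthened two steps at a time by going back and forth along an edge,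
so some walk has length exactly `D - 1` or `D`, whichever has the parity of `G.dist u v`. -/
lemma Connected.exists_walk_length_eq_pred_or_eq [Nontrivial V] (hG : G.Connected) {D : ℕ}
    {u v : V} (huv : G.dist u v ≤ D) :
    ∃ p : G.Walk u v, p.length = D - 1 ∨ p.length = D := by
  obtain ⟨w, huw⟩ := hG.preconnected.exists_adj_of_nontrivial u
  obtain ⟨p, hp⟩ := hG.exists_walk_length_eq_dist u v
  obtain ⟨m, hm | hm⟩ := Nat.even_or_odd' (D - G.dist u v)
  · obtain ⟨q, hq⟩ := exists_walk_length_eq_add_two_mul huw p m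
    exact ⟨q, Or.inr (by omega)⟩
  · obtain ⟨q, hq⟩ := exists_walk_length_eq_add_two_mul huw p m
    exact ⟨q, Or.inl (by omega)⟩

lemma Connected.one_le_adjMatrix_pow_pred_add_pow [Fintype V] [DecidableEq V] [DecidableRel G.Adj]
    [Nontrivial V] (hG : G.Connected) {D : ℕ} (hD : ∀ u v, G.dist u v ≤ D) (u v : V) :
    1 ≤ (G.adjMatrix ℝ ^ (D - 1) + G.adjMatrix ℝ ^ D) u v := by
  obtain ⟨p, hp⟩ := hG.exists_walk_length_eq_pred_or_eq (hD u v)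
  have hcard : 0 < Fintype.card {q : G.Walk u v | q.length = p.length} :=
    Fintype.card_pos_iff.mpr ⟨⟨p, rfl⟩⟩
  simp only [Matrix.add_apply, adjMatrix_pow_apply_eq_card_walk]
  norm_cast
  rcases hp with hp | hp <;> rw [hp] at hcard <;> omega

end SimpleGraph

lemma adjMat_eq_adjMatrix {V : Type*} [Fintype V] (G : SimpleGraph V) [DecidableRel G.Adj] :
    adjMat G = G.adjMatrix ℝ := by
  ext i j
  simp [adjMat, SimpleGraph.adjMatrix_apply]

namespace Matrix

variable {ι : Type*} [Fintype ι]

lemma abs_dotProduct_mulVec_le {A : Matrix ι ι ℝ} (hA : ∀ i j, 0 ≤ A i j) (x y : ι → ℝ) :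
    |x ⬝ᵥ (A *ᵥ y)| ≤ |x| ⬝ᵥ (A *ᵥ |y|) := by
  simp only [dotProduct, mulVec, Finset.mul_sum]
  refine (Finset.abs_sum_le_sum_abs _ _).trans (Finset.sum_le_sum fun i _ => ?_)
  refine (Finset.abs_sum_le_sum_abs _ _).trans (Finset.sum_le_sum fun j _ => ?_)
  simp [abs_mul, abs_of_nonneg (hA i j)]

lemma isAdjEigenvalue_of_mem_spectrum [DecidableEq ι] {A : Matrix ι ι ℝ} {x : ℝ}
    (hx : x ∈ spectrum ℝ A) : IsAdjEigenvalue A x := by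
  rw [← spectrum_toLin', ← Module.End.hasEigenvalue_iff_mem_spectrum] at hx
  obtain ⟨v, hv⟩ := hx.exists_hasEigenvector
  exact ⟨v, hv.2, by simpa using hv.apply_eq_smul⟩

variable [DecidableEq ι] {A : Matrix ι ι ℝ}

lemma IsHermitian.dotProduct_pow_mulVec_le (hA : A.IsHermitian) {k : ℕ} {c : ℝ}
    (h : ∀ x ∈ spectrum ℝ A, x ^ k ≤ c) (w : ι → ℝ) :
    w ⬝ᵥ (A ^ k *ᵥ w) ≤ c * (w ⬝ᵥ w) := by
  have hle : A ^ k ≤ algebraMap ℝ _ c := by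
    rw [← cfc_pow_id (R := ℝ) A k hA.isSelfAdjoint]
    exact (cfc_le_algebraMap_iff (fun x => x ^ k) c A).mpr h
  have := (le_iff.mp hle).dotProduct_mulVec_nonneg w
  rw [sub_mulVec, dotProduct_sub, Algebra.algebraMap_eq_smul_one, smul_mulVec, one_mulVec,
    dotProduct_smul, smul_eq_mul, star_trivial] at this
  linarith

/-- The quadratic form at `|v|` dominates the one at `v` in absolute value, so the most negative
eigenvalue cannot beat the largest one. -/
lemma IsHermitian.abs_le_of_mem_spectrum (hA : A.IsHermitian) (hA₀ : ∀ i j, 0 ≤ A i j)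
    {μ : ℝ} (hμ : IsMaxAdjEigenvalue A μ) {x : ℝ} (hx : x ∈ spectrum ℝ A) : |x| ≤ μ := by
  have hle : ∀ y ∈ spectrum ℝ A, y ^ 1 ≤ μ := fun y hy =>
    (pow_one y).trans_le (hμ.2 y (isAdjEigenvalue_of_mem_spectrum hy))
  obtain ⟨v, hv, hAv⟩ := isAdjEigenvalue_of_mem_spectrum hx
  have hvv : 0 < v ⬝ᵥ v := by simpa using dotProduct_self_star_pos_iff.mpr hv
  have hquad : -x * (v ⬝ᵥ v) ≤ μ * (v ⬝ᵥ v) :=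
    calc -x * (v ⬝ᵥ v) = -(v ⬝ᵥ (A *ᵥ v)) := by
          rw [hAv, dotProduct_smul, smul_eq_mul, neg_mul]
      _ ≤ |v| ⬝ᵥ (A *ᵥ |v|) := (neg_le_abs _).trans (abs_dotProduct_mulVec_le hA₀ v v)
      _ ≤ μ * (|v| ⬝ᵥ |v|) := by simpa using hA.dotProduct_pow_mulVec_le hle |v|
      _ = μ * (v ⬝ᵥ v) := by simp [dotProduct]
  rw [abs_le]
  exact ⟨by nlinarith, by simpa using hle x hx⟩

end Matrix

theorem stmt3_general {n : ℕ} (hn : 3 ≤ n) (G : SimpleGraph (Fin n)) (hG : G.Connected)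
    (D : ℕ) (hD1 : ∀ u v, G.dist u v ≤ D)
    (μ : ℝ) (hmax : IsMaxAdjEigenvalue (adjMat G) μ) :
    μ ^ (D - 1) + μ ^ D ≥ (n : ℝ) := by
  classical
  have : Nontrivial (Fin n) := Fin.nontrivial_iff_two_le.mpr (by omega)
  rw [adjMat_eq_adjMatrix] at hmax
  set A := G.adjMatrix ℝ
  have hA : A.IsHermitian := isHermitian_iff_isSymm.mpr G.isSymm_adjMatrix
  have hA₀ : ∀ i j, 0 ≤ A i j := fun i j => by
    by_cases h : G.Adj i j <;> simp [A, h]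
  have hspec : ∀ k, ∀ x ∈ spectrum ℝ A, x ^ k ≤ μ ^ k := fun k x hx =>
    (le_abs_self _).trans ((abs_pow x k).trans_le
      (pow_le_pow_left₀ (abs_nonneg x) (hA.abs_le_of_mem_spectrum hA₀ hmax hx) k))
  have hwalks : ∀ k, (1 : Fin n → ℝ) ⬝ᵥ (A ^ k *ᵥ 1) ≤ μ ^ k * n := fun k => by
    simpa using hA.dotProduct_pow_mulVec_le (hspec k) 1
  have hpairs : (n : ℝ) * n ≤ (1 : Fin n → ℝ) ⬝ᵥ (A ^ (D - 1) *ᵥ 1) + 1 ⬝ᵥ (A ^ D *ᵥ 1) :=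
    calc (n : ℝ) * n = ∑ _u : Fin n, ∑ _v : Fin n, (1 : ℝ) := by simp
      _ ≤ ∑ u, ∑ v, (A ^ (D - 1) + A ^ D) u v := by
          gcongr with u _ v _
          exact hG.one_le_adjMatrix_pow_pred_add_pow hD1 u v
      _ = _ := by simp [dotProduct, mulVec, Finset.sum_add_distrib]
  have hn₀ : (0 : ℝ) < n := by positivity
  nlinarith [hwalks (D - 1), hwalks D]

theorem stmt3 {n : ℕ} (hn : 3 ≤ n) (G : SimpleGraph (Fin n)) (hG : G.Connected)
    (D : ℕ) (hD1 : ∀ u v, G.dist u v ≤ D) (hD2 : ∃ u v, G.dist u v = D)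
    (μ : ℝ) (hmax : IsMaxAdjEigenvalue (adjMat G) μ) :
    μ ^ (D - 1) + μ ^ D ≥ (n : ℝ) :=
  stmt3_general hn G hG D hD1 μ hmax
end

section
/- If G is a connected, nonregular, nonbipartite graph of order n, diameter D, and maximum degree Δ, then Δ + μ_min(G) > 1/(n(D+1)) + 1/(μ(G)^{2D} · n). -/
/-!
Let `y > 0` be a Perron eigenvector of `μ`: for a top eigenvector `x`, `|x|` is again one, and
positivity spreads along edges. With `L` the Laplacian,
`(Δ - μ) ‖y‖² = ∑ᵥ (Δ - d v) (y v)² + yᵀ L y`. Take `p` where `y` is largest and `w` with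
`d w < Δ`. Cauchy–Schwarz along a shortest `p`–`w` path gives `(y p - y w)² ≤ D yᵀ L y`, so
`(Δ - μ) ‖y‖² ≥ (y w)² + yᵀ L y ≥ (y p)² / (D + 1) > ‖y‖² / (n (D + 1))`,
the last step strict because `y` is not constant on a nonregular graph.

As `G` is not bipartite, every vertex lies on a closed walk of odd length `k = 2D + 1`, so
the diagonal of `Aᵏ` is at least `1`. For an eigenvector `z` of `ν`, comparing
`zᵀ Aᵏ z = νᵏ ‖z‖²` with the Schur bound `∑ (Aᵏ)ᵢⱼ |zᵢ zⱼ| ≤ μᵏ ‖z‖²` (which comes from the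
positive eigenvector `y` of `Aᵏ`) gives `μᵏ + νᵏ ≥ 2`. Since `|ν| ≤ μ`,
`μᵏ - (-ν)ᵏ ≤ k μ²ᴰ (μ + ν)`, hence `μ + ν ≥ 2 / (k μ²ᴰ) > 1 / (n μ²ᴰ)` because `k < 2n`.
-/

open Matrix

lemma pow_succ_sub_pow_succ_le {a b : ℝ} (h : |b| ≤ a) (k : ℕ) :
    a ^ (k + 1) - b ^ (k + 1) ≤ (k + 1) * a ^ k * (a - b) := by
  have ha : 0 ≤ a := (abs_nonneg b).trans h
  have hterm : ∀ i ∈ Finset.range (k + 1), a ^ i * b ^ (k + 1 - 1 - i) ≤ a ^ k := by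
    intro i hi
    have hik : i ≤ k := Nat.lt_succ_iff.mp (Finset.mem_range.mp hi)
    calc a ^ i * b ^ (k + 1 - 1 - i) ≤ a ^ i * |b| ^ (k - i) := by
          rw [Nat.add_sub_cancel]
          exact mul_le_mul_of_nonneg_left ((le_abs_self _).trans (abs_pow b _).le) (by positivity)
      _ ≤ a ^ i * a ^ (k - i) := by gcongr
      _ = a ^ k := pow_mul_pow_sub a hik
  rw [← geom_sum₂_mul]
  have hsum := Finset.sum_le_sum hterm
  rw [Finset.sum_const, Finset.card_range, nsmul_eq_mul] at hsum
  push_cast at hsum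
  exact mul_le_mul_of_nonneg_right hsum (by linarith [le_abs_self b])

lemma sq_le_add_one_mul_of_sq_sub_le {a b D L : ℝ} (hD : 0 ≤ D) (hL : 0 ≤ L)
    (h : (b - a) ^ 2 ≤ D * L) : b ^ 2 ≤ (D + 1) * (a ^ 2 + L) := by
  suffices 2 * a * (b - a) ≤ D * a ^ 2 + L by nlinarith
  rcases hD.eq_or_lt with rfl | hDpos
  · nlinarith [sq_nonneg (b - a)]
  · refine le_of_mul_le_mul_left ?_ hDpos
    nlinarith [sq_nonneg (D * a - (b - a))]

namespace Matrix

variable {V : Type*} [Fintype V]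

section Nonneg

variable {M : Matrix V V ℝ} {c d : ℝ} {y z : V → ℝ}

lemma dotProduct_mulVec_eq_sum (M : Matrix V V ℝ) (x : V → ℝ) :
    x ⬝ᵥ (M *ᵥ x) = ∑ i, ∑ j, M i j * (x i * x j) := by
  simp only [dotProduct, mulVec, Finset.mul_sum]
  exact Finset.sum_congr rfl fun i _ => Finset.sum_congr rfl fun j _ => by ring

lemma dotProduct_self_pos {x : V → ℝ} (hx : x ≠ 0) : 0 < x ⬝ᵥ x :=
  lt_of_le_of_ne (Finset.sum_nonneg fun i _ => mul_self_nonneg (x i))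
    (Ne.symm (dotProduct_self_eq_zero.not.mpr hx))

lemma dotProduct_mulVec_le_abs (hM : ∀ i j, 0 ≤ M i j) (x : V → ℝ) :
    x ⬝ᵥ (M *ᵥ x) ≤ |x| ⬝ᵥ (M *ᵥ |x|) := by
  simp only [dotProduct, mulVec, Finset.mul_sum, Pi.abs_apply]
  refine Finset.sum_le_sum fun i _ => Finset.sum_le_sum fun j _ => ?_
  calc x i * (M i j * x j) ≤ |x i * (M i j * x j)| := le_abs_self _
    _ = |x i| * (M i j * |x j|) := by rw [abs_mul, abs_mul, abs_of_nonneg (hM i j)]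

lemma sum_mul_abs_le_of_mulVec_eq (hM : ∀ i j, 0 ≤ M i j) (hsym : M.IsSymm)
    (hy : ∀ i, 0 < y i) (hMy : M *ᵥ y = c • y) (x : V → ℝ) :
    ∑ i, ∑ j, M i j * |x i * x j| ≤ c * (x ⬝ᵥ x) := by
  set S := ∑ i, ∑ j, M i j * (x i ^ 2 * (y j / y i))
  have hS : S = c * (x ⬝ᵥ x) := by
    have hrow : ∀ i, ∑ j, M i j * y j = c * y i := fun i => by
      simpa [mulVec, dotProduct] using congrFun hMy i
    calc S = ∑ i, x i ^ 2 / y i * ∑ j, M i j * y j := by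
          simp only [S, Finset.mul_sum]
          exact Finset.sum_congr rfl fun i _ => Finset.sum_congr rfl fun j _ => by ring
      _ = c * (x ⬝ᵥ x) := by
          simp only [hrow, dotProduct, Finset.mul_sum]
          exact Finset.sum_congr rfl fun i _ => by field_simp [(hy i).ne']
  have hS' : ∑ i, ∑ j, M i j * (x j ^ 2 * (y i / y j)) = S := by
    rw [Finset.sum_comm]
    simp only [S, hsym.apply]
  -- AM-GM with the weights `y j / y i` and `y i / y j`
  have hterm : ∀ i j, M i j * |x i * x j| ≤
      (M i j * (x i ^ 2 * (y j / y i)) + M i j * (x j ^ 2 * (y i / y j))) / 2 := by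
    intro i j
    have hi := hy i
    have hj := hy j
    have key : x i ^ 2 * (y j / y i) + x j ^ 2 * (y i / y j) - 2 * |x i * x j|
        = (|x i| * y j - |x j| * y i) ^ 2 / (y i * y j) := by
      rw [abs_mul, ← sq_abs (x i), ← sq_abs (x j)]
      field_simp
      ring
    have : 0 ≤ (|x i| * y j - |x j| * y i) ^ 2 / (y i * y j) := by positivity
    nlinarith [hM i j]
  calc ∑ i, ∑ j, M i j * |x i * x j|
      ≤ ∑ i, ∑ j, (M i j * (x i ^ 2 * (y j / y i)) + M i j * (x j ^ 2 * (y i / y j))) / 2 :=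
        Finset.sum_le_sum fun i _ => Finset.sum_le_sum fun j _ => hterm i j
    _ = (S + ∑ i, ∑ j, M i j * (x j ^ 2 * (y i / y j))) / 2 := by
        simp only [S, add_div, Finset.sum_div, Finset.sum_add_distrib]
    _ = c * (x ⬝ᵥ x) := by rw [hS', hS]; ring

lemma neg_le_of_mulVec_eq (hM : ∀ i j, 0 ≤ M i j) (hsym : M.IsSymm)
    (hy : ∀ i, 0 < y i) (hMy : M *ᵥ y = c • y) (hz : z ≠ 0) (hMz : M *ᵥ z = d • z) :
    -c ≤ d := by
  have hquad : d * (z ⬝ᵥ z) = ∑ i, ∑ j, M i j * (z i * z j) := by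
    rw [← dotProduct_mulVec_eq_sum, hMz, dotProduct_smul, smul_eq_mul]
  have hlow : -(∑ i, ∑ j, M i j * |z i * z j|) ≤ ∑ i, ∑ j, M i j * (z i * z j) := by
    simp only [← Finset.sum_neg_distrib, ← mul_neg]
    exact Finset.sum_le_sum fun i _ => Finset.sum_le_sum fun j _ =>
      mul_le_mul_of_nonneg_left (neg_abs_le _) (hM i j)
  have := sum_mul_abs_le_of_mulVec_eq hM hsym hy hMy z
  nlinarith [dotProduct_self_pos hz]

lemma two_le_add_of_one_le_diag (hM : ∀ i j, 0 ≤ M i j) (hsym : M.IsSymm)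
    (hdiag : ∀ i, 1 ≤ M i i) (hy : ∀ i, 0 < y i) (hMy : M *ᵥ y = c • y) (hz : z ≠ 0)
    (hMz : M *ᵥ z = d • z) : 2 ≤ c + d := by
  have hquad : d * (z ⬝ᵥ z) = ∑ i, ∑ j, M i j * (z i * z j) := by
    rw [← dotProduct_mulVec_eq_sum, hMz, dotProduct_smul, smul_eq_mul]
  -- only the diagonal terms of the nonnegative double sum are kept
  have hlow : 2 * (z ⬝ᵥ z) ≤ ∑ i, ∑ j, (M i j * |z i * z j| + M i j * (z i * z j)) := by
    rw [dotProduct, Finset.mul_sum]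
    refine Finset.sum_le_sum fun i _ => le_trans ?_ <| Finset.single_le_sum (f := fun j =>
      M i j * |z i * z j| + M i j * (z i * z j))
      (fun j _ => by nlinarith [hM i j, neg_abs_le (z i * z j)]) (Finset.mem_univ i)
    rw [abs_mul_self]
    nlinarith [hdiag i, mul_self_nonneg (z i)]
  have := sum_mul_abs_le_of_mulVec_eq hM hsym hy hMy z
  simp only [Finset.sum_add_distrib] at hlow
  nlinarith [dotProduct_self_pos hz]

end Nonneg

variable [DecidableEq V] {A : Matrix V V ℝ} {μ : ℝ}

lemma pow_mulVec_eq_smul {c : ℝ} {x : V → ℝ} (h : A *ᵥ x = c • x) (k : ℕ) :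
    (A ^ k) *ᵥ x = c ^ k • x := by
  induction k with
  | zero => simp
  | succ k ih => rw [pow_succ, ← mulVec_mulVec, h, mulVec_smul, ih, smul_smul, pow_succ']

lemma IsHermitian.posSemidef_smul_one_sub (hA : A.IsHermitian)
    (h : ∀ β, IsAdjEigenvalue A β → β ≤ μ) :
    (μ • (1 : Matrix V V ℝ) - A).PosSemidef := by
  have hB : (μ • (1 : Matrix V V ℝ) - A).IsHermitian :=
    (isHermitian_one.smul (IsSelfAdjoint.all μ)).sub hA
  refine hB.posSemidef_iff_eigenvalues_nonneg.mpr fun i => ?_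
  set v : V → ℝ := ⇑(hB.eigenvectorBasis i)
  have hv : A *ᵥ v = (μ - hB.eigenvalues i) • v := by
    have := hB.mulVec_eigenvectorBasis i
    rw [sub_mulVec, smul_mulVec, one_mulVec] at this
    rw [sub_smul, ← this, sub_sub_cancel]
  have hv0 : v ≠ 0 := fun h0 =>
    hB.eigenvectorBasis.orthonormal.ne_zero i (by ext j; exact congrFun h0 j)
  simpa using h _ ⟨v, hv0, hv⟩

-- `|x|ᵀ (μ - A) |x| ≤ xᵀ (μ - A) x = 0` and `μ - A` is positive semidefinite
lemma IsHermitian.mulVec_abs_eq_smul (hA : A.IsHermitian) (hA₀ : ∀ i j, 0 ≤ A i j)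
    (h : ∀ β, IsAdjEigenvalue A β → β ≤ μ) {x : V → ℝ} (hx : A *ᵥ x = μ • x) :
    A *ᵥ |x| = μ • |x| := by
  have hB := hA.posSemidef_smul_one_sub h
  have habs : |x| ⬝ᵥ |x| = x ⬝ᵥ x := by
    simp only [dotProduct, Pi.abs_apply, abs_mul_abs_self]
  have hq : |x| ⬝ᵥ ((μ • (1 : Matrix V V ℝ) - A) *ᵥ |x|) = 0 := by
    refine le_antisymm ?_ (by simpa using hB.dotProduct_mulVec_nonneg |x|)
    have := dotProduct_mulVec_le_abs hA₀ x
    rw [hx, dotProduct_smul] at this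
    simp only [sub_mulVec, smul_mulVec, one_mulVec, dotProduct_sub, dotProduct_smul, habs,
      smul_eq_mul] at this ⊢
    linarith
  have := (hB.dotProduct_mulVec_zero_iff |x|).mp (by simpa using hq)
  rwa [sub_mulVec, smul_mulVec, one_mulVec, sub_eq_zero, eq_comm] at this

end Matrix

namespace SimpleGraph

variable {V : Type*} {G : SimpleGraph V} {μ ν : ℝ} {D : ℕ}

-- otherwise the parity of the distance from `v` would be a proper 2-colouring
lemma exists_adj_dist_eq_of_not_colorable_two (hnb : ¬ G.Colorable 2) (v : V) :
    ∃ a b, G.Adj a b ∧ G.dist v a = G.dist v b := by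
  by_contra! h
  refine hnb ⟨Coloring.mk (fun w => ⟨G.dist v w % 2, Nat.mod_lt _ two_pos⟩)
    fun {a b} hab => ?_⟩
  rw [ne_eq, Fin.mk.injEq]
  have := h a b hab
  rcases hab.diff_dist_adj (u := v) with hd | hd | hd <;> omega

lemma Adj.exists_walk_length_eq_two_mul {a b : V} (hab : G.Adj a b) :
    ∀ m : ℕ, ∃ p : G.Walk a a, p.length = 2 * m
  | 0 => ⟨.nil, rfl⟩
  | m + 1 => by
    obtain ⟨p, hp⟩ := hab.exists_walk_length_eq_two_mul m
    exact ⟨.cons hab (.cons hab.symm p), by simp [hp]; ring⟩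

-- walk out to an edge `ab` with `dist v a = dist v b`, go back and forth along it, and return
lemma Connected.exists_walk_length_eq_two_mul_add_one (hG : G.Connected)
    (hnb : ¬ G.Colorable 2) (hD : ∀ u v, G.dist u v ≤ D) (v : V) :
    ∃ p : G.Walk v v, p.length = 2 * D + 1 := by
  obtain ⟨a, b, hab, hd⟩ := exists_adj_dist_eq_of_not_colorable_two hnb v
  obtain ⟨p, hp⟩ := hG.exists_walk_length_eq_dist v a
  obtain ⟨q, hq⟩ := hG.exists_walk_length_eq_dist v b
  obtain ⟨c, hc⟩ := hab.exists_walk_length_eq_two_mul (D - G.dist v a)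
  refine ⟨p.append (c.append (.cons hab q.reverse)), ?_⟩
  simp only [Walk.length_append, Walk.length_cons, Walk.length_reverse, hp, hq, hc, ← hd]
  have := hD v a
  omega

variable [DecidableRel G.Adj]

lemma adjMatrix_apply_nonneg (u v : V) : 0 ≤ G.adjMatrix ℝ u v := by
  by_cases h : G.Adj u v <;> simp [h]

variable [Fintype V]

lemma adjMat_eq_adjMatrix : adjMat G = G.adjMatrix ℝ := by
  ext i j
  simp [adjMat, adjMatrix_apply]

-- the zero set of `y` is closed under adjacency
lemma Connected.pos_of_adjMatrix_mulVec_eq (hG : G.Connected) {y : V → ℝ}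
    (hy : G.adjMatrix ℝ *ᵥ y = μ • y) (hy₀ : 0 ≤ y) (hne : y ≠ 0) (v : V) :
    0 < y v := by
  have hspread : ∀ {u w}, G.Adj u w → y u = 0 → y w = 0 := by
    intro u w huw hu
    have hsum : ∑ x ∈ G.neighborFinset u, y x = 0 := by
      rw [← adjMatrix_mulVec_apply, hy, Pi.smul_apply, hu, smul_zero]
    exact (Finset.sum_eq_zero_iff_of_nonneg fun x _ => hy₀ x).mp hsum w
      ((mem_neighborFinset G u w).mpr huw)
  have hwalk : ∀ {u w} (_ : G.Walk u w), y u = 0 → y w = 0 := by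
    intro u w p
    induction p with
    | nil => exact id
    | cons h _ ih => exact fun hu => ih (hspread h hu)
  obtain ⟨w, hw⟩ := Function.ne_iff.mp hne
  exact (hy₀ v).lt_of_ne fun hv => hw (hwalk (hG v w).some hv.symm)

lemma sum_darts_eq_sum_sum_ite (f : V → V → ℝ) :
    ∑ d : G.Dart, f d.fst d.snd = ∑ i, ∑ j, if G.Adj i j then f i j else 0 := by
  rw [← Fintype.sum_prod_type' (f := fun i j => if G.Adj i j then f i j else 0),
    ← Finset.sum_filter]
  exact Finset.sum_bij' (fun d _ => d.toProd) (fun q hq => ⟨q, (Finset.mem_filter.mp hq).2⟩)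
    (fun d _ => by simp [d.adj]) (fun _ _ => Finset.mem_univ _) (fun _ _ => rfl)
    (fun _ _ => rfl) (fun _ _ => rfl)

lemma exists_degree_lt_maxDegree (hnreg : ¬ ∃ r, G.IsRegularOfDegree r) :
    ∃ v, G.degree v < G.maxDegree := by
  by_contra! h
  exact hnreg ⟨G.maxDegree, fun v => le_antisymm (G.degree_le_maxDegree v) (h v)⟩

lemma exists_ne_of_adjMatrix_mulVec_eq (hnreg : ¬ ∃ r, G.IsRegularOfDegree r) {y : V → ℝ}
    (hy : G.adjMatrix ℝ *ᵥ y = μ • y) {v : V} (hv : y v ≠ 0) : ∃ w, y w ≠ y v := by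
  by_contra! h
  have hdeg : ∀ w, (G.degree w : ℝ) = μ := fun w => by
    have := congrFun hy w
    rw [show y = Function.const V (y v) from funext h, adjMatrix_mulVec_const_apply] at this
    exact mul_right_cancel₀ hv this
  exact hnreg ⟨G.degree v, fun w => by exact_mod_cast (hdeg w).trans (hdeg v).symm⟩

variable [DecidableEq V]

lemma Connected.exists_pos_eigenvector (hG : G.Connected)
    (hmax : IsMaxAdjEigenvalue (G.adjMatrix ℝ) μ) :
    ∃ y : V → ℝ, (∀ v, 0 < y v) ∧ G.adjMatrix ℝ *ᵥ y = μ • y := by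
  obtain ⟨⟨x, hx₀, hx⟩, hle⟩ := hmax
  have hy := (G.isHermitian_adjMatrix ℝ).mulVec_abs_eq_smul adjMatrix_apply_nonneg hle hx
  refine ⟨|x|, hG.pos_of_adjMatrix_mulVec_eq hy (abs_nonneg x) ?_, hy⟩
  exact mt (Pi.abs_eq_zero x).mp hx₀

lemma adjMatrix_pow_apply_nonneg (k : ℕ) (u v : V) : 0 ≤ (G.adjMatrix ℝ ^ k) u v := by
  rw [adjMatrix_pow_apply_eq_card_walk]
  positivity

lemma one_le_adjMatrix_pow_apply {u v : V} (p : G.Walk u v) :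
    1 ≤ (G.adjMatrix ℝ ^ p.length) u v := by
  rw [adjMatrix_pow_apply_eq_card_walk, Nat.one_le_cast, Nat.one_le_iff_ne_zero]
  have : Nonempty {q : G.Walk u v | q.length = p.length} := ⟨⟨p, rfl⟩⟩
  exact Fintype.card_ne_zero

lemma Connected.two_le_pow_add_pow (hG : G.Connected) (hnb : ¬ G.Colorable 2)
    (hD : ∀ u v, G.dist u v ≤ D) (hmax : IsMaxAdjEigenvalue (G.adjMatrix ℝ) μ)
    (hν : IsAdjEigenvalue (G.adjMatrix ℝ) ν) :
    2 ≤ μ ^ (2 * D + 1) + ν ^ (2 * D + 1) := by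
  obtain ⟨y, hy, hAy⟩ := hG.exists_pos_eigenvector hmax
  obtain ⟨z, hz, hAz⟩ := hν
  refine two_le_add_of_one_le_diag (adjMatrix_pow_apply_nonneg _) ((isSymm_adjMatrix G).pow _)
    (fun v => ?_) hy (pow_mulVec_eq_smul hAy _) hz (pow_mulVec_eq_smul hAz _)
  obtain ⟨p, hp⟩ := hG.exists_walk_length_eq_two_mul_add_one hnb hD v
  exact hp ▸ one_le_adjMatrix_pow_apply p

lemma Connected.two_le_mul_pow_mul_add (hG : G.Connected) (hnb : ¬ G.Colorable 2)
    (hD : ∀ u v, G.dist u v ≤ D) (hmax : IsMaxAdjEigenvalue (G.adjMatrix ℝ) μ)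
    (hmin : IsMinAdjEigenvalue (G.adjMatrix ℝ) ν) :
    2 ≤ (2 * D + 1) * μ ^ (2 * D) * (μ + ν) := by
  have hgap := hG.two_le_pow_add_pow hnb hD hmax hmin.1
  obtain ⟨y, hy, hAy⟩ := hG.exists_pos_eigenvector hmax
  obtain ⟨z, hz, hAz⟩ := hmin.1
  have hνμ : ν ≤ μ := hmax.2 ν hmin.1
  have hμν : -μ ≤ ν :=
    neg_le_of_mulVec_eq adjMatrix_apply_nonneg (isSymm_adjMatrix G) hy hAy hz hAz
  have habs : |-ν| ≤ μ := abs_le.mpr ⟨by linarith, by linarith⟩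
  have := pow_succ_sub_pow_succ_le habs (2 * D)
  rw [Odd.neg_pow ⟨D, rfl⟩] at this
  push_cast at this
  linarith

lemma dotProduct_lapMatrix_mulVec (y : V → ℝ) :
    y ⬝ᵥ (G.lapMatrix ℝ *ᵥ y) = (∑ d : G.Dart, (y d.fst - y d.snd) ^ 2) / 2 := by
  rw [← toLinearMap₂'_apply', lapMatrix_toLinearMap₂']
  congr 1
  exact (sum_darts_eq_sum_sum_ite fun i j => (y i - y j) ^ 2).symm

-- a path never uses a dart together with its reverse, since its edges are distinct
lemma Walk.IsPath.two_mul_sum_darts_le {u v : V} {p : G.Walk u v} (hp : p.IsPath)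
    {f : G.Dart → ℝ} (hf : ∀ d, 0 ≤ f d) (hsymm : ∀ d, f d.symm = f d) :
    2 * ∑ d ∈ p.darts.toFinset, f d ≤ ∑ d, f d := by
  set S := p.darts.toFinset
  have hdisj : Disjoint S (S.map ⟨Dart.symm, Dart.symm_involutive.injective⟩) := by
    refine Finset.disjoint_left.mpr fun d hd hd' => ?_
    obtain ⟨d', hd'S, rfl⟩ := Finset.mem_map.mp hd'
    have hinj := List.inj_on_of_nodup_map (p.edges_nodup_of_support_nodup hp.support_nodup)
    have := hinj (List.mem_toFinset.mp hd'S) (List.mem_toFinset.mp hd) (Dart.edge_symm d').symm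
    exact d'.symm_ne this.symm
  calc 2 * ∑ d ∈ S, f d
      = ∑ d ∈ S ∪ S.map ⟨Dart.symm, Dart.symm_involutive.injective⟩, f d := by
        rw [Finset.sum_union hdisj, Finset.sum_map]
        simp only [Function.Embedding.coeFn_mk, hsymm]
        ring
    _ ≤ ∑ d, f d := Finset.sum_le_univ_sum_of_nonneg hf

lemma Walk.IsPath.sq_sub_le_length_mul {u v : V} {p : G.Walk u v} (hp : p.IsPath)
    (y : V → ℝ) : (y u - y v) ^ 2 ≤ p.length * (y ⬝ᵥ (G.lapMatrix ℝ *ᵥ y)) := by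
  have hnodup := p.darts_nodup_of_support_nodup hp.support_nodup
  have htele : ∑ d ∈ p.darts.toFinset, (y d.fst - y d.snd) = y u - y v := by
    rw [List.sum_toFinset _ hnodup]
    clear hp hnodup
    induction p with
    | nil => simp
    | cons h q ih => simp [ih]
  have hcs := sq_sum_le_card_mul_sum_sq (s := p.darts.toFinset)
    (f := fun d => y d.fst - y d.snd)
  rw [htele, List.toFinset_card_of_nodup hnodup, Walk.length_darts] at hcs
  have hpath := hp.two_mul_sum_darts_le (f := fun d => (y d.fst - y d.snd) ^ 2)
    (fun _ => sq_nonneg _)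
    (fun d => by simp only [Dart.symm_toProd, Prod.fst_swap, Prod.snd_swap]; ring)
  rw [dotProduct_lapMatrix_mulVec]
  calc (y u - y v) ^ 2 ≤ p.length * ∑ d ∈ p.darts.toFinset, (y d.fst - y d.snd) ^ 2 := hcs
    _ ≤ p.length * ((∑ d : G.Dart, (y d.fst - y d.snd) ^ 2) / 2) := by gcongr; linarith

lemma Connected.sq_sub_le_mul (hG : G.Connected) (hD : ∀ u v, G.dist u v ≤ D) (y : V → ℝ)
    (u v : V) : (y u - y v) ^ 2 ≤ D * (y ⬝ᵥ (G.lapMatrix ℝ *ᵥ y)) := by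
  obtain ⟨p, hp, hlen⟩ := hG.exists_path_of_dist u v
  refine (hp.sq_sub_le_length_mul y).trans ?_
  have := (posSemidef_lapMatrix ℝ G).dotProduct_mulVec_nonneg y
  rw [star_trivial] at this
  gcongr
  exact_mod_cast hlen ▸ hD u v

lemma maxDegree_sub_mul_dotProduct_self {y : V → ℝ} (hy : G.adjMatrix ℝ *ᵥ y = μ • y) :
    (G.maxDegree - μ) * (y ⬝ᵥ y)
      = ∑ v, (G.maxDegree - G.degree v : ℝ) * y v ^ 2 + y ⬝ᵥ (G.lapMatrix ℝ *ᵥ y) := by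
  rw [lapMatrix, sub_mulVec, dotProduct_sub, dotProduct_mulVec_degMatrix, hy, dotProduct_smul]
  simp only [dotProduct, smul_eq_mul, Finset.mul_sum, sub_mul, Finset.sum_sub_distrib]
  ring_nf

lemma Connected.one_div_lt_maxDegree_sub (hG : G.Connected)
    (hnreg : ¬ ∃ r, G.IsRegularOfDegree r) (hD : ∀ u v, G.dist u v ≤ D)
    (hmax : IsMaxAdjEigenvalue (G.adjMatrix ℝ) μ) :
    1 / (Fintype.card V * (D + 1)) < (G.maxDegree : ℝ) - μ := by
  obtain ⟨y, hy, hAy⟩ := hG.exists_pos_eigenvector hmax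
  obtain ⟨w, hw⟩ := exists_degree_lt_maxDegree hnreg
  obtain ⟨p, -, hp⟩ := Finset.exists_max_image Finset.univ y
    (Finset.univ_nonempty_iff.mpr hG.nonempty)
  have hlt : y ⬝ᵥ y < Fintype.card V * y p ^ 2 := by
    obtain ⟨v, hv⟩ := exists_ne_of_adjMatrix_mulVec_eq hnreg hAy (hy p).ne'
    rw [← nsmul_eq_mul, ← Finset.card_univ, ← Finset.sum_const]
    refine Finset.sum_lt_sum (fun u _ => ?_) ⟨v, Finset.mem_univ v, ?_⟩
    · nlinarith [hy u, hp u (Finset.mem_univ u)]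
    · nlinarith [hy v, (hp v (Finset.mem_univ v)).lt_of_ne hv]
  have hle : y p ^ 2 ≤ (D + 1) * ((G.maxDegree - μ) * (y ⬝ᵥ y)) := by
    have hQ := (posSemidef_lapMatrix ℝ G).dotProduct_mulVec_nonneg y
    rw [star_trivial] at hQ
    refine (sq_le_add_one_mul_of_sq_sub_le (Nat.cast_nonneg D) hQ
      (hG.sq_sub_le_mul hD y p w)).trans ?_
    rw [maxDegree_sub_mul_dotProduct_self hAy]
    gcongr
    have hw' : (1 : ℝ) ≤ G.maxDegree - G.degree w := by
      rw [le_sub_iff_add_le']; exact_mod_cast hw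
    refine le_trans ?_ (Finset.single_le_sum
      (f := fun v => (G.maxDegree - G.degree v : ℝ) * y v ^ 2)
      (fun v _ => mul_nonneg (sub_nonneg.mpr (by exact_mod_cast G.degree_le_maxDegree v))
        (sq_nonneg _)) (Finset.mem_univ w))
    nlinarith [sq_nonneg (y w)]
  have hpos : 0 < y ⬝ᵥ y := dotProduct_self_pos fun h => (hy p).ne' (congrFun h p)
  have := hG.nonempty
  rw [div_lt_iff₀ (by positivity)]
  nlinarith

end SimpleGraph

theorem stmt17 {n : ℕ} (G : SimpleGraph (Fin n)) (hG : G.Connected)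
    [DecidableRel G.Adj]
    (hnreg : ¬ ∃ r, G.IsRegularOfDegree r) (hnb : ¬ G.Colorable 2)
    (D : ℕ) (hD1 : ∀ u v, G.dist u v ≤ D) (hD2 : ∃ u v, G.dist u v = D)
    (μ ν : ℝ) (hmax : IsMaxAdjEigenvalue (adjMat G) μ)
    (hmin : IsMinAdjEigenvalue (adjMat G) ν) :
    (G.maxDegree : ℝ) + ν > 1 / (n * (D + 1)) + 1 / (μ ^ (2 * D) * n) := by
  rw [SimpleGraph.adjMat_eq_adjMatrix] at hmax hmin
  have hdeg := hG.one_div_lt_maxDegree_sub hnreg hD1 hmax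
  have hgap := hG.two_le_mul_pow_mul_add hnb hD1 hmax hmin
  rw [Fintype.card_fin] at hdeg
  have hDn : D < n := by
    obtain ⟨u, v, huv⟩ := hD2
    obtain ⟨p, hp, hlen⟩ := hG.exists_path_of_dist u v
    simpa [hlen, huv] using hp.length_lt
  have hk : (2 * D + 1 : ℝ) < 2 * n := by exact_mod_cast (by omega : 2 * D + 1 < 2 * n)
  have hpos : 0 < μ ^ (2 * D) * (μ + ν) := by nlinarith
  have hadd := pos_of_mul_pos_right hpos ((even_two_mul D).pow_nonneg μ)
  have hpow := pos_of_mul_pos_left hpos hadd.le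
  have hμν : 1 / (μ ^ (2 * D) * n) < μ + ν := by
    rw [div_lt_iff₀ (mul_pos hpow (Nat.cast_pos.mpr (by omega)))]
    nlinarith
  linarith
end
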